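/- Let N be a positive odd integer and let B be an integer with 2 ≤ B ≤ (N+1)/2. Let w ∈ ℂ^N be a window and i an integer such that the DFT of w satisfies ŵ_{(i+t) mod N} = 0 for all t = 0, …, N − B − 1 and ŵ_{(i+N−B) mod N} ≠ 0. Let 0 < L < N be a separation parameter and let z ∈ ℂ^N be any analytic signal. Then N·|ŷ^w_{k0, 0}(z)| = |ẑ_{(N−1)/2}|·|ŵ_{(i+N−B) mod N}|, where k0 = ((N−1)/2 − (i + N − B)) mod N; consequently there exists θ ∈ ℝ with ẑ_{(N−1)/2} = (N·|ŷ^w_{k0,0}(z)| / |ŵ_{(i+N−B) mod N}|)·exp(i·θ), i.e., ẑ_{(N−1)/2} is determined up to a unimodular scalar by this single STFT measurement. -/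

import Mathlib

open Complex

/-- Discrete Fourier transform of a signal indexed by `ZMod N`. -/
noncomputable def dft {N : ℕ} (z : ZMod N → ℂ) (k : ZMod N) : ℂ :=
  ∑ n ∈ Finset.range N, z n *
    Complex.exp (-2 * (Real.pi : ℂ) * Complex.I * (k.val : ℂ) * (n : ℂ) / N)

/-- Short-time Fourier transform measurement `ŷ^w_{k,m}(z)` with window `w` and
separation parameter `L`. -/
noncomputable def stft {N : ℕ} (w : ZMod N → ℂ) (L : ℤ) (z : ZMod N → ℂ) (k m : ℤ) : ℂ :=
  ∑ n ∈ Finset.range N, z n * w ((m * L - n : ℤ) : ZMod N) *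
    Complex.exp (-2 * (Real.pi : ℂ) * Complex.I * (k : ℂ) * (n : ℂ) / N)

/-- The DFT of the analytic signal associated with a real signal `x`. -/
noncomputable def analyticHat (N : ℕ) (x : ZMod N → ℝ) (k : ℕ) : ℂ :=
  if N % 2 = 0 then
    if k = 0 then dft (fun n => (x n : ℂ)) 0
    else if k ≤ N / 2 - 1 then 2 * dft (fun n => (x n : ℂ)) (k : ZMod N)
    else if k = N / 2 then dft (fun n => (x n : ℂ)) ((N / 2 : ℕ) : ZMod N)
    else 0
  else
    if k = 0 then dft (fun n => (x n : ℂ)) 0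
    else if k ≤ (N - 1) / 2 then 2 * dft (fun n => (x n : ℂ)) (k : ZMod N)
    else 0

/-- The analytic signal `A(x)` of a real signal `x`, obtained by inverse DFT. -/
noncomputable def analyticSignal {N : ℕ} (x : ZMod N → ℝ) : ZMod N → ℂ :=
  fun n => (1 / N : ℂ) * ∑ k ∈ Finset.range N, analyticHat N x k *
    Complex.exp (2 * (Real.pi : ℂ) * Complex.I * (k : ℂ) * (n.val : ℂ) / N)

/-- A signal `z ∈ ℂ^N` is analytic if `z = A(x)` for some real signal `x`. -/
def IsAnalytic {N : ℕ} (z : ZMod N → ℂ) : Prop := ∃ x : ZMod N → ℝ, z = analyticSignal x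

/-! At `m = 0` the STFT is the DFT of `n ↦ z n * w (-n)`, which by the convolution theorem is
`N⁻¹ * ∑ j, ẑ j * ŵ (j - k₀)`. For odd `N` an analytic signal has `ẑ j = 0` above
`h = (N - 1) / 2`, while `k₀` is chosen so that every `j < h` lands `j - k₀` in the run of zeros
of `ŵ`. Only `ẑ h * ŵ (i + N - B)` survives, so the measurement gives `|ẑ h|` and loses
just the phase. -/

open Finset
open scoped ZMod

lemma analyticHat_eq_zero_of_odd {N : ℕ} (hOdd : N % 2 = 1) (x : ZMod N → ℝ) {k : ℕ}
    (hk : (N - 1) / 2 < k) : analyticHat N x k = 0 := by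
  rw [analyticHat, if_neg (by omega), if_neg (by omega), if_neg (by omega)]

variable {N : ℕ} [NeZero N]

lemma sum_range_eq_sum_zmod_val {M : Type*} [AddCommMonoid M] (g : ℕ → M) :
    ∑ n ∈ range N, g n = ∑ a : ZMod N, g a.val :=
  Finset.sum_nbij' (fun n => (n : ZMod N)) (fun a => a.val) (by simp) (by simp [ZMod.val_lt])
    (fun n hn => ZMod.val_natCast_of_lt (mem_range.1 hn)) (by simp)
    (fun n hn => by rw [ZMod.val_natCast_of_lt (mem_range.1 hn)])

lemma dft_eq_zmod_dft : (dft : (ZMod N → ℂ) → ZMod N → ℂ) = 𝓕 := by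
  ext z k
  rw [dft, ZMod.dft_apply, sum_range_eq_sum_zmod_val]
  refine sum_congr rfl fun a _ => ?_
  rw [smul_eq_mul, mul_comm, ZMod.natCast_zmod_val,
    show -(a * k) = Int.cast (-(a.val * k.val : ℤ)) by simp, ZMod.stdAddChar_coe]
  congr 2
  push_cast
  ring

lemma stft_zero (w : ZMod N → ℂ) (L : ℤ) (z : ZMod N → ℂ) (k : ℤ) :
    stft w L z k 0 = 𝓕 (fun n => z n * w (-n)) (k : ZMod N) := by
  rw [stft, ZMod.dft_apply, sum_range_eq_sum_zmod_val]
  refine sum_congr rfl fun a _ => ?_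
  rw [smul_eq_mul, mul_comm, ZMod.natCast_zmod_val,
    show -(a * (k : ZMod N)) = Int.cast (-(a.val * k : ℤ)) by simp, ZMod.stdAddChar_coe]
  simp only [zero_mul, zero_sub, Int.cast_neg, Int.cast_natCast, ZMod.natCast_zmod_val]
  congr 2
  push_cast
  ring

lemma dft_mul (f g : ZMod N → ℂ) (k : ZMod N) :
    𝓕 (f * g) k = (N : ℂ)⁻¹ * ∑ j, 𝓕 f j * 𝓕 g (k - j) := by
  have hf (n : ZMod N) : f n = (N : ℂ)⁻¹ • ∑ j, ZMod.stdAddChar (j * n) • 𝓕 f j := by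
    rw [← ZMod.invDFT_apply, LinearEquiv.symm_apply_apply]
  simp_rw [ZMod.dft_apply (f * g), Pi.mul_apply, hf, smul_eq_mul, ZMod.dft_apply g,
    smul_eq_mul, mul_sum, sum_mul, mul_sum]
  rw [sum_comm]
  refine sum_congr rfl fun j _ => sum_congr rfl fun n _ => ?_
  rw [show -(n * (k - j)) = -(n * k) + j * n by ring, AddChar.map_add_eq_mul]
  ring

lemma dft_mul_comp_neg (f g : ZMod N → ℂ) (k : ZMod N) :
    𝓕 (fun n => f n * g (-n)) k = (N : ℂ)⁻¹ * ∑ j, 𝓕 f j * 𝓕 g (j - k) := by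
  rw [show (fun n => f n * g (-n)) = f * fun n => g (-n) from rfl, dft_mul, ZMod.dft_comp_neg]
  simp only [neg_sub]

lemma analyticSignal_eq_invDFT (x : ZMod N → ℝ) :
    analyticSignal x = 𝓕⁻ (fun k => analyticHat N x k.val) := by
  ext n
  rw [analyticSignal, ZMod.invDFT_apply, sum_range_eq_sum_zmod_val, smul_eq_mul, one_div]
  congr 1
  refine sum_congr rfl fun a _ => ?_
  rw [smul_eq_mul, mul_comm, show a * n = Int.cast (a.val * n.val : ℤ) by simp,
    ZMod.stdAddChar_coe]
  congr 2
  push_cast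
  ring

lemma dft_analyticSignal (x : ZMod N → ℝ) (k : ZMod N) :
    𝓕 (analyticSignal x) k = analyticHat N x k.val := by
  rw [analyticSignal_eq_invDFT, LinearEquiv.apply_symm_apply]

lemma IsAnalytic.dft_eq_zero_of_odd {z : ZMod N → ℂ} (hz : IsAnalytic z) (hOdd : N % 2 = 1)
    {k : ZMod N} (hk : (N - 1) / 2 < k.val) : 𝓕 z k = 0 := by
  obtain ⟨x, rfl⟩ := hz
  rw [dft_analyticSignal, analyticHat_eq_zero_of_odd hOdd x hk]

lemma dft_window_shift_eq_zero {B : ℕ} (hBle : B ≤ (N + 1) / 2)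
    {w : ZMod N → ℂ} {i : ℤ}
    (hzero : ∀ t : ℕ, (t : ℤ) ≤ (N : ℤ) - B - 1 → 𝓕 w ((i + t : ℤ) : ZMod N) = 0)
    {j : ZMod N} (hj : j.val < (N - 1) / 2) :
    𝓕 w (j - ((((N - 1) / 2 : ℕ) : ℤ) - (i + N - B) : ℤ)) = 0 := by
  obtain ⟨t, ht⟩ : ∃ t : ℕ, (t : ℤ) = N - B - ((N - 1) / 2 - j.val : ℕ) :=
    ⟨_, Int.toNat_of_nonneg (by omega)⟩
  have hshift : j - ((((N - 1) / 2 : ℕ) : ℤ) - (i + N - B) : ℤ) = ((i + t : ℤ) : ZMod N) := by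
    rw [ht, Nat.cast_sub hj.le]
    conv_lhs => rw [← ZMod.natCast_zmod_val j]
    push_cast
    ring
  rw [hshift]
  exact hzero t (by omega)

lemma IsAnalytic.stft_top_eq_of_odd {B : ℕ} (hOdd : N % 2 = 1) (hBle : B ≤ (N + 1) / 2)
    {w : ZMod N → ℂ} {i : ℤ}
    (hzero : ∀ t : ℕ, (t : ℤ) ≤ (N : ℤ) - B - 1 → 𝓕 w ((i + t : ℤ) : ZMod N) = 0)
    {z : ZMod N → ℂ} (hz : IsAnalytic z) (L : ℤ) :
    stft w L z ((((N - 1) / 2 : ℕ) : ℤ) - (i + N - B)) 0 =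
      (N : ℂ)⁻¹ * (𝓕 z (((N - 1) / 2 : ℕ) : ZMod N) * 𝓕 w ((i + N - B : ℤ) : ZMod N)) := by
  have hval : ((((N - 1) / 2 : ℕ) : ZMod N)).val = (N - 1) / 2 :=
    ZMod.val_natCast_of_lt (by have := NeZero.pos N; omega)
  rw [stft_zero, dft_mul_comp_neg, sum_eq_single (((N - 1) / 2 : ℕ) : ZMod N)]
  · simp only [Int.cast_sub, Int.cast_add, Int.cast_natCast, sub_sub_cancel]
  · intro j _ hj
    rcases lt_or_gt_of_ne (fun h => hj (ZMod.val_injective _ (h.trans hval.symm))) with hlt | hgt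
    · rw [dft_window_shift_eq_zero hBle hzero hlt, mul_zero]
    · rw [hz.dft_eq_zero_of_odd hOdd hgt, zero_mul]
  · simp

theorem recover_top_component_odd_general (N : ℕ) (hOdd : N % 2 = 1)
    (B : ℕ) (hBle : B ≤ (N + 1) / 2)
    (w : ZMod N → ℂ) (i : ℤ)
    (hzero : ∀ t : ℕ, (t : ℤ) ≤ (N : ℤ) - B - 1 → dft w ((i + t : ℤ) : ZMod N) = 0)
    (hwB : dft w ((i + N - B : ℤ) : ZMod N) ≠ 0)
    (L : ℤ)
    (z : ZMod N → ℂ) (hz : IsAnalytic z) :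
    (N : ℝ) * norm (stft w L z ((((N - 1) / 2 : ℕ) : ℤ) - (i + N - B)) 0) =
      norm (dft z (((N - 1) / 2 : ℕ) : ZMod N)) *
        norm (dft w ((i + N - B : ℤ) : ZMod N)) ∧
    ∃ θ : ℝ, dft z (((N - 1) / 2 : ℕ) : ZMod N) =
        ((N * norm (stft w L z ((((N - 1) / 2 : ℕ) : ℤ) - (i + N - B)) 0) /
          norm (dft w ((i + N - B : ℤ) : ZMod N)) : ℝ) : ℂ) *
          Complex.exp (Complex.I * θ) := by
  have : NeZero N := ⟨by omega⟩
  rw [dft_eq_zmod_dft] at hzero hwB ⊢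
  have hnorm : (N : ℝ) * ‖stft w L z ((((N - 1) / 2 : ℕ) : ℤ) - (i + N - B)) 0‖ =
      ‖𝓕 z (((N - 1) / 2 : ℕ) : ZMod N)‖ * ‖𝓕 w ((i + N - B : ℤ) : ZMod N)‖ := by
    rw [hz.stft_top_eq_of_odd hOdd hBle hzero L, norm_mul, norm_mul, norm_inv,
      Complex.norm_natCast, mul_inv_cancel_left₀ (by exact_mod_cast NeZero.ne N)]
  refine ⟨hnorm, arg (𝓕 z (((N - 1) / 2 : ℕ) : ZMod N)), ?_⟩
  rw [hnorm, mul_div_cancel_right₀ _ (norm_ne_zero_iff.2 hwB), mul_comm I,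
    Complex.norm_mul_exp_arg_mul_I]

/-- for odd `N`, the component `ẑ_{(N-1)/2}` of an analytic signal is
determined up to a unimodular scalar by a single STFT measurement. -/
theorem recover_top_component_odd (N : ℕ) (hN : 0 < N) (hOdd : N % 2 = 1)
    (B : ℕ) (hB2 : 2 ≤ B) (hBle : B ≤ (N + 1) / 2)
    (w : ZMod N → ℂ) (i : ℤ)
    (hzero : ∀ t : ℕ, (t : ℤ) ≤ (N : ℤ) - B - 1 → dft w ((i + t : ℤ) : ZMod N) = 0)
    (hwB : dft w ((i + N - B : ℤ) : ZMod N) ≠ 0)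
    (L : ℤ) (hL0 : 0 < L) (hLN : L < (N : ℤ))
    (z : ZMod N → ℂ) (hz : IsAnalytic z) :
    (N : ℝ) * norm (stft w L z ((((N - 1) / 2 : ℕ) : ℤ) - (i + N - B)) 0) =
      norm (dft z (((N - 1) / 2 : ℕ) : ZMod N)) *
        norm (dft w ((i + N - B : ℤ) : ZMod N)) ∧
    ∃ θ : ℝ, dft z (((N - 1) / 2 : ℕ) : ZMod N) =
        ((N * norm (stft w L z ((((N - 1) / 2 : ℕ) : ℤ) - (i + N - B)) 0) /
          norm (dft w ((i + N - B : ℤ) : ZMod N)) : ℝ) : ℂ) *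
          Complex.exp (Complex.I * θ) :=
  recover_top_component_odd_general N hOdd B hBle w i hzero hwB L z hz
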